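/- Let F be an algebraically closed field of arbitrary characteristic. For every element a of the split octonion algebra O over F there exists an F-algebra automorphism g of O such that g a has one of the following forms: (D) g a = (α₁, 0, 0, α₈) for some α₁, α₈ ∈ F, or (K₁) g a = (α₁, (1,0,0), 0, α₁) for some α₁ ∈ F. -/

import Mathlib

namespace OctoPaper

variable (F : Type*) [Field F]

/-- The split (Zorn matrix) octonion algebra over `F`. -/
structure Octo where
  x1 : F
  u : Fin 3 → F
  v : Fin 3 → F
  x8 : F

variable {F}

/-- Dot product on `F³`. -/
def dot (u v : Fin 3 → F) : F := u 0 * v 0 + u 1 * v 1 + u 2 * v 2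

/-- Cross product on `F³`. -/
def cross (u v : Fin 3 → F) : Fin 3 → F :=
  ![u 1 * v 2 - u 2 * v 1, u 2 * v 0 - u 0 * v 2, u 0 * v 1 - u 1 * v 0]

instance : Mul (Octo F) where
  mul x y :=
    ⟨x.x1 * y.x1 + dot x.u y.v,
     fun i => x.x1 * y.u i + y.x8 * x.u i - cross x.v y.v i,
     fun i => y.x1 * x.v i + x.x8 * y.v i + cross x.u y.u i,
     x.x8 * y.x8 + dot x.v y.u⟩

instance : Add (Octo F) where add x y := ⟨x.x1 + y.x1, x.u + y.u, x.v + y.v, x.x8 + y.x8⟩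
instance : Neg (Octo F) where neg x := ⟨-x.x1, -x.u, -x.v, -x.x8⟩
instance : Sub (Octo F) where sub x y := x + -y
instance : SMul F (Octo F) where smul c x := ⟨c * x.x1, c • x.u, c • x.v, c * x.x8⟩
instance : One (Octo F) where one := ⟨1, 0, 0, 1⟩
instance : Zero (Octo F) where zero := ⟨0, 0, 0, 0⟩

/-- Trace of an octonion. -/
def tr (x : Octo F) : F := x.x1 + x.x8

/-- Norm of an octonion. -/
def onorm (x : Octo F) : F := x.x1 * x.x8 - dot x.u x.v

/-- Conjugate of an octonion. -/
def conj (x : Octo F) : Octo F := ⟨x.x8, -x.u, -x.v, x.x1⟩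

/-- `g` is an `F`-algebra automorphism of the split octonion algebra:
an `F`-linear bijection preserving multiplication. -/
def IsAut (g : Octo F → Octo F) : Prop :=
  Function.Bijective g ∧
  (∀ x y : Octo F, g (x + y) = g x + g y) ∧
  (∀ (c : F) (x : Octo F), g (c • x) = c • g x) ∧
  (∀ x y : Octo F, g (x * y) = g x * g y)

/-- The automorphism `ρ(g)` of `O` attached to `g ∈ SL₃(F)`. -/
def rho (g : Matrix.SpecialLinearGroup (Fin 3) F) (x : Octo F) : Octo F :=
  ⟨x.x1, Matrix.vecMul x.u (g : Matrix (Fin 3) (Fin 3) F),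
   Matrix.vecMul x.v (Matrix.transpose (↑(g⁻¹) : Matrix (Fin 3) (Fin 3) F)), x.x8⟩

/-- The automorphism `ℏ` of `O`. -/
def hbar (x : Octo F) : Octo F := ⟨x.x8, -x.v, -x.u, x.x1⟩

/-- The automorphism `δ₁(u)` of `O`. -/
def delta1 (w : Fin 3 → F) (y : Octo F) : Octo F :=
  ⟨y.x1 - dot w y.v,
   fun i => (y.x1 - y.x8 - dot w y.v) * w i + y.u i,
   fun i => y.v i - cross y.u w i,
   y.x8 + dot w y.v⟩

/-- The automorphism `δ₂(v)` of `O`. -/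
def delta2 (w : Fin 3 → F) (y : Octo F) : Octo F :=
  ⟨y.x1 + dot y.u w,
   fun i => y.u i + cross y.v w i,
   fun i => (-y.x1 + y.x8 - dot y.u w) * w i + y.v i,
   y.x8 - dot y.u w⟩

end OctoPaper

open OctoPaper

namespace OctoPaper
set_option linter.unusedSectionVars false
variable {F : Type*} [Field F]

lemma fin3_funext {f g : Fin 3 → F} (h0 : f 0 = g 0) (h1 : f 1 = g 1) (h2 : f 2 = g 2) :
    f = g := by
  funext i; fin_cases i <;> assumption

lemma oext {x y : Octo F} (h1 : x.x1 = y.x1) (hu0 : x.u 0 = y.u 0) (hu1 : x.u 1 = y.u 1)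
    (hu2 : x.u 2 = y.u 2) (hv0 : x.v 0 = y.v 0) (hv1 : x.v 1 = y.v 1) (hv2 : x.v 2 = y.v 2)
    (h8 : x.x8 = y.x8) : x = y := by
  cases x; cases y
  simp only [Octo.mk.injEq]
  exact ⟨h1, fin3_funext hu0 hu1 hu2, fin3_funext hv0 hv1 hv2, h8⟩

@[simp] lemma mul_x1 (x y : Octo F) : (x*y).x1 = x.x1*y.x1 + dot x.u y.v := rfl
@[simp] lemma mul_u (x y : Octo F) (i : Fin 3) :
    (x*y).u i = x.x1 * y.u i + y.x8 * x.u i - cross x.v y.v i := rfl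
@[simp] lemma mul_v (x y : Octo F) (i : Fin 3) :
    (x*y).v i = y.x1 * x.v i + x.x8 * y.v i + cross x.u y.u i := rfl
@[simp] lemma mul_x8 (x y : Octo F) : (x*y).x8 = x.x8*y.x8 + dot x.v y.u := rfl
@[simp] lemma add_x1 (x y : Octo F) : (x+y).x1 = x.x1+y.x1 := rfl
@[simp] lemma add_u (x y : Octo F) (i : Fin 3) : (x+y).u i = x.u i + y.u i := rfl
@[simp] lemma add_v (x y : Octo F) (i : Fin 3) : (x+y).v i = x.v i + y.v i := rfl
@[simp] lemma add_x8 (x y : Octo F) : (x+y).x8 = x.x8+y.x8 := rfl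
@[simp] lemma smul_x1 (c : F) (x : Octo F) : (c • x).x1 = c * x.x1 := rfl
@[simp] lemma smul_u (c : F) (x : Octo F) (i : Fin 3) : (c • x).u i = c * x.u i := rfl
@[simp] lemma smul_v (c : F) (x : Octo F) (i : Fin 3) : (c • x).v i = c * x.v i := rfl
@[simp] lemma smul_x8 (c : F) (x : Octo F) : (c • x).x8 = c * x.x8 := rfl
@[simp] lemma one_x1 : (1 : Octo F).x1 = 1 := rfl
@[simp] lemma one_u (i : Fin 3) : (1 : Octo F).u i = 0 := rfl
@[simp] lemma one_v (i : Fin 3) : (1 : Octo F).v i = 0 := rfl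
@[simp] lemma one_x8 : (1 : Octo F).x8 = 1 := rfl
@[simp] lemma zero_x1 : (0 : Octo F).x1 = 0 := rfl
@[simp] lemma zero_u (i : Fin 3) : (0 : Octo F).u i = 0 := rfl
@[simp] lemma zero_v (i : Fin 3) : (0 : Octo F).v i = 0 := rfl
@[simp] lemma zero_x8 : (0 : Octo F).x8 = 0 := rfl
@[simp] lemma cross_0 (u v : Fin 3 → F) : cross u v 0 = u 1 * v 2 - u 2 * v 1 := rfl
@[simp] lemma cross_1 (u v : Fin 3 → F) : cross u v 1 = u 2 * v 0 - u 0 * v 2 := rfl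
@[simp] lemma cross_2 (u v : Fin 3 → F) : cross u v 2 = u 0 * v 1 - u 1 * v 0 := rfl
@[simp] lemma dot_def (u v : Fin 3 → F) : dot u v = u 0 * v 0 + u 1 * v 1 + u 2 * v 2 := rfl
@[simp] lemma d1_x1 (w : Fin 3 → F) (y : Octo F) : (delta1 w y).x1 = y.x1 - dot w y.v := rfl
@[simp] lemma d1_u (w : Fin 3 → F) (y : Octo F) (i : Fin 3) :
    (delta1 w y).u i = (y.x1 - y.x8 - dot w y.v) * w i + y.u i := rfl
@[simp] lemma d1_v (w : Fin 3 → F) (y : Octo F) (i : Fin 3) :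
    (delta1 w y).v i = y.v i - cross y.u w i := rfl
@[simp] lemma d1_x8 (w : Fin 3 → F) (y : Octo F) : (delta1 w y).x8 = y.x8 + dot w y.v := rfl
@[simp] lemma d2_x1 (w : Fin 3 → F) (y : Octo F) : (delta2 w y).x1 = y.x1 + dot y.u w := rfl
@[simp] lemma d2_u (w : Fin 3 → F) (y : Octo F) (i : Fin 3) :
    (delta2 w y).u i = y.u i + cross y.v w i := rfl
@[simp] lemma d2_v (w : Fin 3 → F) (y : Octo F) (i : Fin 3) :
    (delta2 w y).v i = (-y.x1 + y.x8 - dot y.u w) * w i + y.v i := rfl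
@[simp] lemma d2_x8 (w : Fin 3 → F) (y : Octo F) : (delta2 w y).x8 = y.x8 - dot y.u w := rfl
@[simp] lemma hb_x1 (y : Octo F) : (hbar y).x1 = y.x8 := rfl
@[simp] lemma hb_u (y : Octo F) (i : Fin 3) : (hbar y).u i = -y.v i := rfl
@[simp] lemma hb_v (y : Octo F) (i : Fin 3) : (hbar y).v i = -y.u i := rfl
@[simp] lemma hb_x8 (y : Octo F) : (hbar y).x8 = y.x1 := rfl

lemma dot_cross_self (w u : Fin 3 → F) : dot w (cross u w) = 0 := by simp; ring
lemma cross_self (v : Fin 3 → F) (i : Fin 3) : cross v v i = 0 := by fin_cases i <;> simp <;> ring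

-- inverses
lemma delta1_inv (w : Fin 3 → F) (y : Octo F) : delta1 (-w) (delta1 w y) = y := by
  apply oext <;> simp <;> ring
lemma delta2_inv (w : Fin 3 → F) (y : Octo F) : delta2 (-w) (delta2 w y) = y := by
  apply oext <;> simp <;> ring
lemma hbar_inv (y : Octo F) : hbar (hbar y) = y := by apply oext <;> simp

lemma isAut_delta1 (w : Fin 3 → F) : IsAut (delta1 (F := F) w) := by
  refine ⟨Function.bijective_iff_has_inverse.2 ⟨delta1 (-w), fun y => delta1_inv w y,
      fun y => by simpa using delta1_inv (-w) y⟩, fun x y => ?_, fun c x => ?_, fun x y => ?_⟩ <;>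
    apply oext <;> simp <;> ring

lemma isAut_delta2 (w : Fin 3 → F) : IsAut (delta2 (F := F) w) := by
  refine ⟨Function.bijective_iff_has_inverse.2 ⟨delta2 (-w), fun y => delta2_inv w y,
      fun y => by simpa using delta2_inv (-w) y⟩, fun x y => ?_, fun c x => ?_, fun x y => ?_⟩ <;>
    apply oext <;> simp <;> ring

lemma isAut_hbar : IsAut (hbar (F := F)) := by
  refine ⟨Function.bijective_iff_has_inverse.2 ⟨hbar, hbar_inv, hbar_inv⟩,
    fun x y => ?_, fun c x => ?_, fun x y => ?_⟩ <;> apply oext <;> simp <;> ring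

lemma isAut_id : IsAut (fun x : Octo F => x) :=
  ⟨Function.bijective_id, fun _ _ => rfl, fun _ _ => rfl, fun _ _ => rfl⟩

lemma IsAut.comp {g h : Octo F → Octo F} (hg : IsAut g) (hh : IsAut h) :
    IsAut (fun x => g (h x)) :=
  ⟨Function.Bijective.comp hg.1 hh.1,
   fun x y => by show g (h (x+y)) = g (h x) + g (h y); rw [hh.2.1, hg.2.1],
   fun c x => by show g (h (c • x)) = c • g (h x); rw [hh.2.2.1, hg.2.2.1],
   fun x y => by show g (h (x*y)) = g (h x) * g (h y); rw [hh.2.2.2, hg.2.2.2]⟩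

lemma zero_smul_octo (x : Octo F) : (0 : F) • x = 0 := by apply oext <;> simp

lemma IsAut.map_zero {g : Octo F → Octo F} (hg : IsAut g) : g 0 = 0 := by
  have h := hg.2.2.1 0 0
  rwa [zero_smul_octo, zero_smul_octo] at h

lemma octo_one_mul (x : Octo F) : (1 : Octo F) * x = x := by apply oext <;> simp

lemma IsAut.map_one {g : Octo F → Octo F} (hg : IsAut g) : g 1 = 1 := by
  have key : ∀ z : Octo F, g 1 * z = z := by
    intro z
    obtain ⟨x, rfl⟩ := hg.1.2 z
    rw [← hg.2.2.2, octo_one_mul]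
  have h1 := key ⟨1, 0, 0, 0⟩
  have h2 := key ⟨0, 0, 0, 1⟩
  apply oext
  · have := congrArg Octo.x1 h1; simpa using this
  · have := congrFun (congrArg Octo.u h2) 0; simpa using this
  · have := congrFun (congrArg Octo.u h2) 1; simpa using this
  · have := congrFun (congrArg Octo.u h2) 2; simpa using this
  · have := congrFun (congrArg Octo.v h1) 0; simpa using this
  · have := congrFun (congrArg Octo.v h1) 1; simpa using this
  · have := congrFun (congrArg Octo.v h1) 2; simpa using this
  · have := congrArg Octo.x8 h2; simpa using this

end OctoPaper

namespace OctoPaper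
set_option linter.unusedSectionVars false
variable {F : Type*} [Field F]

lemma vec_ne_zero {u : Fin 3 → F} (hu : u ≠ 0) : u 0 ≠ 0 ∨ u 1 ≠ 0 ∨ u 2 ≠ 0 := by
  by_contra hc
  push_neg at hc
  exact hu (fin3_funext hc.1 hc.2.1 hc.2.2)

open Classical in
noncomputable def solveDot (u : Fin 3 → F) (c : F) : Fin 3 → F :=
  if u 0 ≠ 0 then ![c / u 0, 0, 0]
  else if u 1 ≠ 0 then ![0, c / u 1, 0]
  else ![0, 0, c / u 2]

lemma solveDot_spec {u : Fin 3 → F} (hu : u ≠ 0) (c : F) : dot u (solveDot u c) = c := by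
  have h := vec_ne_zero hu
  unfold solveDot
  split_ifs with h0 h1
  · simp; field_simp
  · simp; field_simp
  · have h2 : u 2 ≠ 0 := by tauto
    simp; field_simp

open Classical in
noncomputable def solveCross (u v : Fin 3 → F) : Fin 3 → F :=
  if u 0 ≠ 0 then ![0, v 2 / u 0, -(v 1) / u 0]
  else if u 1 ≠ 0 then ![-(v 2) / u 1, 0, v 0 / u 1]
  else ![v 1 / u 2, -(v 0) / u 2, 0]

lemma solveCross_spec {u v : Fin 3 → F} (hu : u ≠ 0) (hd : dot u v = 0) :
    cross u (solveCross u v) = v := by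
  have h := vec_ne_zero hu
  rw [dot_def] at hd
  unfold solveCross
  split_ifs with h0 h1
  · apply fin3_funext <;> simp <;> field_simp <;> linear_combination -hd
  · apply fin3_funext <;> simp <;> field_simp <;> linear_combination -hd
  · have h2 : u 2 ≠ 0 := by tauto
    apply fin3_funext <;> simp <;> field_simp <;> linear_combination -hd

lemma moveStep {u z : Fin 3 → F} (hu : u ≠ 0) (hz : z ≠ 0) (huz : dot u z = 0) :
    ∃ g : Octo F → Octo F, IsAut g ∧ g ⟨0, u, 0, 0⟩ = (⟨0, z, 0, 0⟩ : Octo F) := by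
  have huz' : dot u z = 0 := huz
  set w1 := solveCross u z with hw1def
  have hw1 : ∀ i, cross u w1 i = z i := fun i => congrFun (solveCross_spec hu huz) i
  have hzu : dot z (-u) = 0 := by
    simp only [dot_def, Pi.neg_apply] at huz ⊢
    linear_combination -huz
  set w2 := solveCross z (-u) with hw2def
  have hw2 : ∀ i, cross z w2 i = -u i := by
    intro i
    have := congrFun (solveCross_spec hz hzu) i
    simpa using this
  have hd2 : dot w2 (-u) = 0 := by
    have h := dot_cross_self w2 z
    have : cross z w2 = -u := solveCross_spec hz hzu
    rwa [this] at h
  refine ⟨fun x => delta1 w2 (hbar (delta1 w1 x)),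
    (isAut_delta1 w2).comp ((isAut_hbar).comp (isAut_delta1 w1)), ?_⟩
  have e1 : delta1 w1 (⟨0, u, 0, 0⟩ : Octo F) = ⟨0, u, fun i => -(z i), 0⟩ := by
    apply oext <;> simp [hw1]
  have e2 : hbar (⟨0, u, fun i => -(z i), 0⟩ : Octo F) = ⟨0, z, fun i => -(u i), 0⟩ := by
    apply oext <;> simp
  have hd2' : dot w2 (fun i => -(u i)) = 0 := by simpa [dot_def] using hd2
  have e3 : delta1 w2 (⟨0, z, fun i => -(u i), 0⟩ : Octo F) = ⟨0, z, 0, 0⟩ := by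
    apply oext <;>
      simp only [d1_x1, d1_u, d1_v, d1_x8, zero_u, zero_v, zero_x1, zero_x8, hd2'] <;>
      simp [hw2] <;> ring
  simp only [e1, e2, e3]

lemma nilpToE1 {u : Fin 3 → F} (hu : u ≠ 0) :
    ∃ g : Octo F → Octo F, IsAut g ∧ g ⟨0, u, 0, 0⟩ = (⟨0, ![1,0,0], 0, 0⟩ : Octo F) := by
  have he1 : (![1,0,0] : Fin 3 → F) ≠ 0 := by
    intro h; have := congrFun h 0; simp at this
  obtain ⟨z, hz, huz, hze⟩ :
      ∃ z : Fin 3 → F, z ≠ 0 ∧ dot u z = 0 ∧ dot z ![1,0,0] = 0 := by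
    by_cases h12 : u 1 = 0 ∧ u 2 = 0
    · exact ⟨![0,1,0], by intro h; have := congrFun h 1; simp at this,
        by simp [h12.1], by simp⟩
    · refine ⟨![0, -(u 2), u 1], ?_, by simp; ring, by simp⟩
      intro h
      rcases not_and_or.1 h12 with h1 | h2
      · exact h1 (by have := congrFun h 2; simpa using this)
      · exact h2 (by have := congrFun h 1; simpa using neg_eq_zero.1 (by simpa using this))
  obtain ⟨g1, hg1, hg1v⟩ := moveStep hu hz huz
  obtain ⟨g2, hg2, hg2v⟩ := moveStep hz he1 hze
  exact ⟨fun x => g2 (g1 x), hg2.comp hg1, by simp only [hg1v, hg2v]⟩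

lemma stage2 {u v : Fin 3 → F} (huv : dot u v = 0) (hne : ¬(u = 0 ∧ v = 0)) :
    ∃ g : Octo F → Octo F, IsAut g ∧ g ⟨0, u, v, 0⟩ = (⟨0, ![1,0,0], 0, 0⟩ : Octo F) := by
  by_cases hu : u = 0
  · have hv : v ≠ 0 := fun h => hne ⟨hu, h⟩
    have hvn : (-v : Fin 3 → F) ≠ 0 := fun h => hv (by simpa using congrArg Neg.neg h)
    obtain ⟨g, hg, hgv⟩ := nilpToE1 hvn
    refine ⟨fun x => g (hbar x), hg.comp isAut_hbar, ?_⟩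
    have e1 : hbar (⟨0, u, v, 0⟩ : Octo F) = ⟨0, -v, 0, 0⟩ := by
      apply oext <;> simp [hu]
    simp only [e1, hgv]
  · set w := solveCross u v with hwdef
    have hw : ∀ i, cross u w i = v i := fun i => congrFun (solveCross_spec hu huv) i
    have hd0 : dot w v = 0 := by
      have h := dot_cross_self w u
      have h2 : cross u w = v := solveCross_spec hu huv
      rwa [h2] at h
    obtain ⟨g, hg, hgv⟩ := nilpToE1 hu
    refine ⟨fun x => g (delta1 w x), hg.comp (isAut_delta1 w), ?_⟩
    have e1 : delta1 w (⟨0, u, v, 0⟩ : Octo F) = ⟨0, u, 0, 0⟩ := by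
      apply oext <;> simp only [d1_x1, d1_u, d1_v, d1_x8, hd0] <;> simp [hw]
    simp only [e1, hgv]

end OctoPaper

namespace OctoPaper
set_option linter.unusedSectionVars false
set_option linter.unnecessarySeqFocus false
variable {F : Type*} [Field F]

lemma octo_eq_zero {x : Octo F} (h1 : x.x1 = 0) (hu : ∀ i, x.u i = 0)
    (hv : ∀ i, x.v i = 0) (h8 : x.x8 = 0) : x = 0 :=
  oext h1 (hu 0) (hu 1) (hu 2) (hv 0) (hv 1) (hv 2) h8

lemma nilp_case {b : Octo F} (hb2 : b * b = 0) (hb : b ≠ 0) :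
    ∃ g : Octo F → Octo F, IsAut g ∧ g b = (⟨0, ![1,0,0], 0, 0⟩ : Octo F) := by
  have h1 : b.x1 * b.x1 + dot b.u b.v = 0 := by
    have := congrArg Octo.x1 hb2; simpa using this
  have h8 : b.x8 * b.x8 + dot b.u b.v = 0 := by
    have := congrArg Octo.x8 hb2; simp at this
    rw [dot_def]; linear_combination this
  have hui : ∀ i, (b.x1 + b.x8) * b.u i = 0 := by
    intro i
    have := congrFun (congrArg Octo.u hb2) i
    simp at this
    have hc := cross_self b.v i
    linear_combination this + hc
  have hvi : ∀ i, (b.x1 + b.x8) * b.v i = 0 := by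
    intro i
    have := congrFun (congrArg Octo.v hb2) i
    simp at this
    have hc := cross_self b.u i
    linear_combination this - hc
  -- not both u and v are zero
  have hne : ¬(b.u = 0 ∧ b.v = 0) := by
    rintro ⟨hu0, hv0⟩
    apply hb
    have hd : dot b.u b.v = 0 := by simp [hu0, hv0]
    rw [hd] at h1 h8
    refine octo_eq_zero ?_ (fun i => by simp [hu0]) (fun i => by simp [hv0]) ?_
    · exact mul_self_eq_zero.1 (by linear_combination h1)
    · exact mul_self_eq_zero.1 (by linear_combination h8)
  -- trace zero
  have htr : b.x1 + b.x8 = 0 := by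
    by_contra htr
    apply hne
    constructor
    · exact fin3_funext (by simpa [htr] using mul_eq_zero.1 (hui 0))
        (by simpa [htr] using mul_eq_zero.1 (hui 1))
        (by simpa [htr] using mul_eq_zero.1 (hui 2))
    · exact fin3_funext (by simpa [htr] using mul_eq_zero.1 (hvi 0))
        (by simpa [htr] using mul_eq_zero.1 (hvi 1))
        (by simpa [htr] using mul_eq_zero.1 (hvi 2))
  have hx8 : b.x8 = -b.x1 := by linear_combination htr
  by_cases hu : b.u = 0
  · -- then x1 = x8 = 0 and b = ⟨0, 0, v, 0⟩
    have hd : dot b.u b.v = 0 := by simp [hu]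
    rw [hd] at h1
    have hx1 : b.x1 = 0 := mul_self_eq_zero.1 (by linear_combination h1)
    have hx8' : b.x8 = 0 := by rw [hx8, hx1, neg_zero]
    have hbeq : b = ⟨0, b.u, b.v, 0⟩ := by apply oext <;> simp [hx1, hx8']
    obtain ⟨g, hg, hgv⟩ := stage2 hd (fun h => hne ⟨h.1, h.2⟩)
    exact ⟨g, hg, by rw [hbeq, hgv]⟩
  · -- u ≠ 0 : apply delta2 with dot u w = -x1
    set w := solveDot b.u (-b.x1) with hwdef
    have hw : dot b.u w = -b.x1 := solveDot_spec hu (-b.x1)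
    set b' := delta2 w b with hb'def
    set u' : Fin 3 → F := fun i => b.u i + cross b.v w i with hu'def
    set v' : Fin 3 → F := fun i => -b.x1 * w i + b.v i with hv'def
    have hb' : b' = ⟨0, u', v', 0⟩ := by
      apply oext <;> simp only [hb'def, d2_x1, d2_u, d2_v, d2_x8, hw, hu'def, hv'def] <;>
        simp [hx8] <;> ring
    have hb'2 : b' * b' = 0 := by
      rw [hb'def, ← (isAut_delta2 w).2.2.2, hb2, (isAut_delta2 w).map_zero]
    have hb'ne : b' ≠ 0 := by
      intro h
      exact hb ((isAut_delta2 w).1.1 (h.trans ((isAut_delta2 w).map_zero).symm))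
    have hd' : dot u' v' = 0 := by
      have := congrArg Octo.x1 hb'2
      rw [hb'] at this
      simpa using this
    have hne' : ¬(u' = 0 ∧ v' = 0) := by
      rintro ⟨h1', h2'⟩
      apply hb'ne
      rw [hb', h1', h2']; rfl
    obtain ⟨g, hg, hgv⟩ := stage2 hd' hne'
    refine ⟨fun x => g (delta2 w x), hg.comp (isAut_delta2 w), ?_⟩
    simp only []
    rw [← hb'def, hb', hgv]

end OctoPaper

namespace OctoPaper
set_option linter.unusedSectionVars false
set_option linter.unnecessarySeqFocus false
variable {F : Type*} [Field F]

lemma killU (q : Fin 3 → F) : delta1 (-q) (⟨1, q, 0, 0⟩ : Octo F) = ⟨1, 0, 0, 0⟩ := by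
  apply oext <;> simp <;> ring

lemma idem_stage {u v : Fin 3 → F} (huv : dot u v = 0) :
    ∃ g : Octo F → Octo F, IsAut g ∧ g ⟨1, u, v, 0⟩ = (⟨1, 0, 0, 0⟩ : Octo F) := by
  by_cases hu : u = 0
  · by_cases hv : v = 0
    · exact ⟨fun x => x, isAut_id, by rw [hu, hv]⟩
    · have hvn : (-v : Fin 3 → F) ≠ 0 := fun h => hv (by simpa using congrArg Neg.neg h)
      set w := solveDot (-v) 1 with hwdef
      have hw : dot (-v) w = 1 := solveDot_spec hvn 1
      refine ⟨fun x => delta1 v (delta2 w (hbar x)),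
        (isAut_delta1 v).comp ((isAut_delta2 w).comp isAut_hbar), ?_⟩
      have e1 : hbar (⟨1, u, v, 0⟩ : Octo F) = ⟨0, -v, 0, 1⟩ := by
        apply oext <;> simp [hu]
      have e2 : delta2 w (⟨0, -v, 0, 1⟩ : Octo F) = ⟨1, -v, 0, 0⟩ := by
        apply oext <;> simp only [d2_x1, d2_u, d2_v, d2_x8, hw] <;> simp <;> ring
      have e3 : delta1 v (⟨1, -v, 0, 0⟩ : Octo F) = ⟨1, 0, 0, 0⟩ := by
        have := killU (-v)
        simpa using this
      simp only [e1, e2, e3]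
  · set w := solveCross u v with hwdef
    have hw : ∀ i, cross u w i = v i := fun i => congrFun (solveCross_spec hu huv) i
    have hd0 : dot w v = 0 := by
      have h := dot_cross_self w u
      have h2 : cross u w = v := solveCross_spec hu huv
      rwa [h2] at h
    refine ⟨fun x => delta1 (-(fun i => w i + u i)) (delta1 w x),
      (isAut_delta1 _).comp (isAut_delta1 w), ?_⟩
    have e1 : delta1 w (⟨1, u, v, 0⟩ : Octo F) = ⟨1, fun i => w i + u i, 0, 0⟩ := by
      apply oext <;> simp only [d1_x1, d1_u, d1_v, d1_x8, hd0] <;> simp [hw]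
    have e2 := killU (fun i => w i + u i)
    simp only [e1, e2]

lemma idem_main {c : Octo F} (hc2 : c * c = c) (htr : c.x1 + c.x8 = 1) (hu : c.u ≠ 0) :
    ∃ g : Octo F → Octo F, IsAut g ∧ g c = (⟨1, 0, 0, 0⟩ : Octo F) := by
  set w := solveDot c.u (1 - c.x1) with hwdef
  have hw : dot c.u w = 1 - c.x1 := solveDot_spec hu _
  have hx8 : c.x8 = 1 - c.x1 := by linear_combination htr
  set u' : Fin 3 → F := fun i => c.u i + cross c.v w i with hu'def
  set v' : Fin 3 → F := fun i => -c.x1 * w i + c.v i with hv'def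
  have hc' : delta2 w c = ⟨1, u', v', 0⟩ := by
    apply oext <;> simp only [d2_x1, d2_u, d2_v, d2_x8, hw, hu'def, hv'def] <;>
      simp [hx8] <;> ring
  have hc'2 : delta2 w c * delta2 w c = delta2 w c := by
    rw [← (isAut_delta2 w).2.2.2, hc2]
  have hd' : dot u' v' = 0 := by
    have := congrArg Octo.x1 hc'2
    rw [hc'] at this
    simpa using this
  obtain ⟨g, hg, hgv⟩ := idem_stage hd'
  exact ⟨fun x => g (delta2 w x), hg.comp (isAut_delta2 w), by simp only [hc', hgv]⟩

lemma idem_case {c : Octo F} (hc2 : c * c = c) (hc0 : c ≠ 0) (hc1 : c ≠ 1) :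
    ∃ g : Octo F → Octo F, IsAut g ∧ g c = (⟨1, 0, 0, 0⟩ : Octo F) := by
  have h1 : c.x1 * c.x1 + dot c.u c.v = c.x1 := by
    have := congrArg Octo.x1 hc2; simpa using this
  have h8 : c.x8 * c.x8 + dot c.u c.v = c.x8 := by
    have := congrArg Octo.x8 hc2; simp at this
    rw [dot_def]; linear_combination this
  have hui : ∀ i, (c.x1 + c.x8 - 1) * c.u i = 0 := by
    intro i
    have := congrFun (congrArg Octo.u hc2) i
    simp at this
    have hc := cross_self c.v i
    linear_combination this + hc
  have hvi : ∀ i, (c.x1 + c.x8 - 1) * c.v i = 0 := by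
    intro i
    have := congrFun (congrArg Octo.v hc2) i
    simp at this
    have hc := cross_self c.u i
    linear_combination this - hc
  by_cases huv : c.u = 0 ∧ c.v = 0
  · -- diagonal idempotent
    have hd : dot c.u c.v = 0 := by simp [huv.1, huv.2]
    rw [hd] at h1 h8
    have hx1 : c.x1 = 0 ∨ c.x1 = 1 := by
      rcases mul_eq_zero.1 (show c.x1 * (c.x1 - 1) = 0 by linear_combination h1) with h | h
      · exact Or.inl h
      · exact Or.inr (by linear_combination h)
    have hx8 : c.x8 = 0 ∨ c.x8 = 1 := by
      rcases mul_eq_zero.1 (show c.x8 * (c.x8 - 1) = 0 by linear_combination h8) with h | h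
      · exact Or.inl h
      · exact Or.inr (by linear_combination h)
    rcases hx1 with hx1 | hx1 <;> rcases hx8 with hx8 | hx8
    · exact absurd (octo_eq_zero hx1 (fun i => by simp [huv.1])
        (fun i => by simp [huv.2]) hx8) hc0
    · exact ⟨hbar, isAut_hbar, by apply oext <;> simp [hx1, hx8, huv.1, huv.2]⟩
    · exact ⟨fun x => x, isAut_id, by apply oext <;> simp [hx1, hx8, huv.1, huv.2]⟩
    · exact absurd (oext (by simp [hx1]) (by simp [huv.1]) (by simp [huv.1])
        (by simp [huv.1]) (by simp [huv.2]) (by simp [huv.2]) (by simp [huv.2])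
        (by simp [hx8])) hc1
  · have htr : c.x1 + c.x8 = 1 := by
      by_contra htr
      have htr' : c.x1 + c.x8 - 1 ≠ 0 := fun h => htr (by linear_combination h)
      apply huv
      constructor
      · exact fin3_funext (by simpa [htr'] using mul_eq_zero.1 (hui 0))
          (by simpa [htr'] using mul_eq_zero.1 (hui 1))
          (by simpa [htr'] using mul_eq_zero.1 (hui 2))
      · exact fin3_funext (by simpa [htr'] using mul_eq_zero.1 (hvi 0))
          (by simpa [htr'] using mul_eq_zero.1 (hvi 1))
          (by simpa [htr'] using mul_eq_zero.1 (hvi 2))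
    by_cases hu : c.u = 0
    · -- v ≠ 0 : apply hbar first
      have hv : c.v ≠ 0 := fun h => huv ⟨hu, h⟩
      have hb2 : hbar c * hbar c = hbar c := by
        rw [← isAut_hbar.2.2.2, hc2]
      have hbu : (hbar c).u ≠ 0 := by
        intro h
        apply hv
        apply fin3_funext <;>
          simpa using congrFun h _
      have hbtr : (hbar c).x1 + (hbar c).x8 = 1 := by
        simp only [hb_x1, hb_x8]; linear_combination htr
      obtain ⟨g, hg, hgv⟩ := idem_main hb2 hbtr hbu
      exact ⟨fun x => g (hbar x), hg.comp isAut_hbar, hgv⟩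
    · exact idem_main hc2 htr hu

end OctoPaper

namespace OctoPaper
set_option linter.unusedSectionVars false
variable {F : Type*} [Field F]

lemma exists_quad_root [IsAlgClosed F] (t n : F) : ∃ l : F, l * l - t * l + n = 0 := by
  obtain ⟨l, hl⟩ := IsAlgClosed.exists_root
    (Polynomial.C 1 * Polynomial.X ^ 2 + Polynomial.C (-t) * Polynomial.X + Polynomial.C n)
    (by rw [Polynomial.degree_quadratic one_ne_zero]; exact (by decide : (2 : WithBot ℕ) ≠ 0))
  simp only [Polynomial.IsRoot, Polynomial.eval_add, Polynomial.eval_mul, Polynomial.eval_pow,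
    Polynomial.eval_C, Polynomial.eval_X] at hl
  exact ⟨l, by linear_combination hl⟩

end OctoPaper

/-- Classification of G₂-orbits of one octonion (Proposition 3.1, existence part). -/
theorem one_octonion_classification (F : Type*) [Field F] [IsAlgClosed F] (a : Octo F) :
    ∃ g : Octo F → Octo F, IsAut g ∧
      ((∃ a1 a8 : F, g a = ⟨a1, 0, 0, a8⟩) ∨
       (∃ a1 : F, g a = ⟨a1, ![1, 0, 0], 0, a1⟩)) := by
  obtain ⟨l, hl⟩ := exists_quad_root (a.x1 + a.x8) (a.x1 * a.x8 - dot a.u a.v) (F := F)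
  set s : F := a.x1 + a.x8 - 2 * l with hsdef
  set b : Octo F := ⟨a.x1 - l, a.u, a.v, a.x8 - l⟩ with hbdef
  rw [dot_def] at hl
  have key : b * b = s • b := by
    apply oext
    · simp only [hbdef, hsdef, mul_x1, smul_x1, dot_def]; linear_combination -hl
    · simp only [hbdef, hsdef, mul_u, smul_u, cross_0]; ring
    · simp only [hbdef, hsdef, mul_u, smul_u, cross_1]; ring
    · simp only [hbdef, hsdef, mul_u, smul_u, cross_2]; ring
    · simp only [hbdef, hsdef, mul_v, smul_v, cross_0]; ring
    · simp only [hbdef, hsdef, mul_v, smul_v, cross_1]; ring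
    · simp only [hbdef, hsdef, mul_v, smul_v, cross_2]; ring
    · simp only [hbdef, hsdef, mul_x8, smul_x8, dot_def]; linear_combination -hl
  -- if the u and v parts of a vanish, the identity automorphism works
  by_cases hzero : (∀ i, a.u i = 0) ∧ (∀ i, a.v i = 0)
  · refine ⟨fun x => x, isAut_id, Or.inl ⟨a.x1, a.x8, ?_⟩⟩
    apply oext <;> simp [hzero.1, hzero.2]
  by_cases hb0 : b = 0
  · -- then a.u = a.v = 0
    exfalso
    apply hzero
    constructor <;> intro i
    · have := congrFun (congrArg Octo.u hb0) i; simpa using this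
    · have := congrFun (congrArg Octo.v hb0) i; simpa using this
  have hab : ∀ (g : Octo F → Octo F), IsAut g → g a = g b + l • 1 := by
    intro g hg
    have ha : a = b + l • 1 := by apply oext <;> simp [hbdef] <;> ring
    rw [ha, hg.2.1, hg.2.2.1, hg.map_one]
  by_cases hs : s = 0
  · -- nilpotent case
    have hbb : b * b = 0 := by rw [key, hs, zero_smul_octo]
    obtain ⟨g, hg, hgv⟩ := nilp_case hbb hb0
    refine ⟨g, hg, Or.inr ⟨l, ?_⟩⟩
    rw [hab g hg, hgv]
    apply oext <;> simp
  · -- semisimple case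
    set c : Octo F := (s⁻¹ : F) • b with hcdef
    have hcc : c * c = c := by
      have h1 : c * c = (s⁻¹ * s⁻¹) • (b * b) := by
        apply oext <;> simp [hcdef] <;> ring
      rw [h1, key]
      have h2 : (s⁻¹ * s⁻¹) • (s • b) = ((s⁻¹ * s⁻¹ * s) • b : Octo F) := by
        apply oext <;> simp <;> ring
      rw [h2, hcdef]
      congr 1
      field_simp
    have hsc : (s : F) • c = b := by
      apply oext <;> simp [hcdef] <;> field_simp
    have hzz : (s : F) • (0 : Octo F) = 0 := by apply oext <;> simp
    have hc0 : c ≠ 0 := fun h => hb0 (by rw [← hsc, h, hzz])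
    by_cases hc1 : c = 1
    · -- b = s • 1, so a.u = a.v = 0, contradiction with hzero
      exfalso
      apply hzero
      constructor <;> intro i
      · have := congrFun (congrArg Octo.u hc1) i
        simp only [hcdef, smul_u, hbdef, one_u] at this
        rcases mul_eq_zero.1 this with h | h
        · exact absurd h (inv_ne_zero hs)
        · exact h
      · have := congrFun (congrArg Octo.v hc1) i
        simp only [hcdef, smul_v, hbdef, one_v] at this
        rcases mul_eq_zero.1 this with h | h
        · exact absurd h (inv_ne_zero hs)
        · exact h
    obtain ⟨g, hg, hgv⟩ := idem_case hcc hc0 hc1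
    refine ⟨g, hg, Or.inl ⟨s + l, l, ?_⟩⟩
    rw [hab g hg, ← hsc, hg.2.2.1, hgv]
    apply oext <;> simp
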